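/- Under the cyclic assignment with K = N and worker sets Z_n of M = N - N_r + m cyclically consecutive indices, for every index i ∈ {1,...,N}, the N_r - m - u cyclically consecutive workers i, i+1, ..., i + (N_r - m - u) - 1 (mod N) all fail to contain every dataset index in the set {i-1, i-2, ..., i-u-1} (mod N), provided u + 1 ≤ N - M - (N_r - m - u - 1), i.e., the u+1 indices preceding worker i are outside Z_j for each such worker j. -/
import Mathlib


/-- Under the cyclic assignment (indices viewed in `ZMod N`), the
`Nr - m - u` cyclically consecutive workers `i, i+1, …, i+(Nr-m-u)-1` all fail to
contain every dataset index in `{i-1, i-2, …, i-u-1}` (mod `N`), where worker `j`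
is assigned `Z j = {j, j+1, …, j+M-1}` with `M = N - Nr + m`, provided
`u + 1 ≤ N - M - (Nr - m - u - 1)`. -/
theorem stmt_11 (N Nr m u M : ℕ) (hm : 1 ≤ m) (hu : 1 ≤ u) (hNr : Nr ≤ N)
    (hM : M = N - Nr + m) (hmu : m + u < Nr)
    (hcond : u + 1 ≤ N - M - (Nr - m - u - 1)) :
    ∀ i : ℕ, ∀ r < Nr - m - u, ∀ t < u + 1, ∀ s < M,
      ((i : ZMod N) - 1 - (t : ZMod N)) ≠ ((i : ZMod N) + (r : ZMod N) + (s : ZMod N)) := by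
  intro i r hr t ht s hs h
  haveI : NeZero N := ⟨by omega⟩
  have h0 : ((1 + t + r + s : ℕ) : ZMod N) = 0 := by
    push_cast
    linear_combination -h
  have hd : N ∣ 1 + t + r + s := (ZMod.natCast_eq_zero_iff _ _).mp h0
  have hle := Nat.le_of_dvd (by omega) hd
  omega
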